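/- arXiv:2506.04380 — 3 statements merged into one kernel-verified Lean document; each statement's English description precedes it below -/
import Mathlib

section
/- (Lemma 2, virtual distillation bound.) Let ρ = Σ_k p_k |ψ_k⟩⟨ψ_k| with (ψ_k) an orthonormal basis of ℂ^d, p_k ≥ 0, Σ_k p_k = 1, and suppose p_q = max_k p_k > 0 is attained at index q. Then for every Hermitian d×d matrix O and every integer n ≥ 1, tr(ρⁿ) > 0 and | tr(ρⁿ O)/tr(ρⁿ) − ⟨ψ_q, O ψ_q⟩ | ≤ 2 ‖O‖_∞ · (Σ_{k≠q} p_kⁿ) / p_qⁿ. (When p_q < 1 the right-hand side equals 2‖O‖_∞ (p_q⁻¹ − 1)ⁿ exp(−(n−1) H_n(p')), where p'_k = p_k/(1 − p_q) for k ≠ q and H_n is the order-n Rényi entropy.) -/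
open MeasureTheory Complex
open scoped BigOperators ComplexConjugate Real NormedSpace ComplexOrder

attribute [local instance] Matrix.frobeniusSeminormedAddCommGroup
  Matrix.frobeniusNormedAddCommGroup Matrix.frobeniusNormedSpace

noncomputable section

/-- The complex inner product on `ℂ^d`, conjugate-linear in the first argument. -/
def cinner {d : ℕ} (u v : Fin d → ℂ) : ℂ := ∑ i, conj (u i) * v i

/-- The rank-one matrix `|u⟩⟨v|`, acting as `w ↦ ⟨v, w⟩ u`. -/
def ketbra {d : ℕ} (u v : Fin d → ℂ) : Matrix (Fin d) (Fin d) ℂ :=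
  Matrix.of fun i j => u i * conj (v j)

/-- The density of the centered normal distribution `N(0, σ)`. -/
def gaussPDF (σ t : ℝ) : ℝ := (Real.sqrt (2 * π) * σ)⁻¹ * Real.exp (-(t ^ 2) / (2 * σ ^ 2))

/-- The time-evolved state `ψ(t) = exp(−i t H) ψ(0)`. -/
def evolve {d : ℕ} (H : Matrix (Fin d) (Fin d) ℂ) (ψ0 : Fin d → ℂ) (t : ℝ) : Fin d → ℂ :=
  (NormedSpace.exp ((-(Complex.I * (t : ℂ))) • H)).mulVec ψ0

/-- The time-evolved pure state `ρ(t) = |ψ(t)⟩⟨ψ(t)|`. -/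
def rhoT {d : ℕ} (H : Matrix (Fin d) (Fin d) ℂ) (ψ0 : Fin d → ℂ) (t : ℝ) :
    Matrix (Fin d) (Fin d) ℂ :=
  ketbra (evolve H ψ0 t) (evolve H ψ0 t)

/-- The Gaussian time-average `ρ̄ = ∫ G(t) ρ(t) dt` (a Bochner integral of the matrix-valued
function, with respect to the Frobenius norm topology on matrices). -/
def rhoBar {d : ℕ} (H : Matrix (Fin d) (Fin d) ℂ) (ψ0 : Fin d → ℂ) (σ : ℝ) :
    Matrix (Fin d) (Fin d) ℂ :=
  ∫ t : ℝ, gaussPDF σ t • rhoT H ψ0 t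

/-- The trace norm (sum of singular values) `‖A‖₁ = tr √(Aᴴ A)`. -/
def traceNorm {d : ℕ} (A : Matrix (Fin d) (Fin d) ℂ) : ℝ :=
  (((Matrix.posSemidef_conjTranspose_mul_self A).1.eigenvectorUnitary : Matrix (Fin d) (Fin d) ℂ) *
    Matrix.diagonal (((↑) : ℝ → ℂ) ∘ (√·) ∘ (Matrix.posSemidef_conjTranspose_mul_self A).1.eigenvalues) *
    (star (Matrix.posSemidef_conjTranspose_mul_self A).1.eigenvectorUnitary : Matrix (Fin d) (Fin d) ℂ)).trace.re

/-- The operator norm `‖A‖_∞` of a matrix acting on the Euclidean space `ℂ^d`. -/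
def opNorm {d : ℕ} (A : Matrix (Fin d) (Fin d) ℂ) : ℝ :=
  ‖Matrix.toEuclideanCLM (𝕜 := ℂ) A‖

/-!
In the eigenbasis `ψ`, `ρⁿ = Σ_k p_kⁿ |ψ_k⟩⟨ψ_k|`, so `tr(ρⁿ O) / tr(ρⁿ)` is the average of the
diagonal entries `c_k = ⟨ψ_k, O ψ_k⟩` with weights `p_kⁿ`. Its distance to `c_q` is
`|Σ_{k≠q} p_kⁿ (c_k − c_q)| / Σ_k p_kⁿ`, where `|c_k − c_q| ≤ 2‖O‖_∞` and `Σ_k p_kⁿ ≥ p_qⁿ`.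
-/

lemma cinner_eq_inner {d : ℕ} (u v : Fin d → ℂ) :
    cinner u v = inner ℂ (WithLp.toLp 2 u) (WithLp.toLp 2 v) := by
  simp only [cinner, EuclideanSpace.inner_eq_star_dotProduct, dotProduct, Pi.star_apply,
    RCLike.star_def]
  exact Finset.sum_congr rfl fun _ _ => mul_comm _ _

lemma norm_cinner_mulVec_le_opNorm {d : ℕ} (O : Matrix (Fin d) (Fin d) ℂ) {u : Fin d → ℂ}
    (hu : cinner u u = 1) : ‖cinner u (O.mulVec u)‖ ≤ opNorm O := by
  set x : EuclideanSpace ℂ (Fin d) := WithLp.toLp 2 u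
  have hx : ‖x‖ = 1 := by
    rw [norm_eq_sqrt_re_inner (𝕜 := ℂ), ← cinner_eq_inner, hu]
    simp
  calc ‖cinner u (O.mulVec u)‖ = ‖inner ℂ x (Matrix.toEuclideanCLM (𝕜 := ℂ) O x)‖ := by
        rw [cinner_eq_inner, Matrix.toEuclideanCLM_toLp]
    _ ≤ ‖x‖ * (opNorm O * ‖x‖) :=
        (norm_inner_le_norm _ _).trans (mul_le_mul_of_nonneg_left
          ((Matrix.toEuclideanCLM (𝕜 := ℂ) O).le_opNorm x) (norm_nonneg x))
    _ = opNorm O := by rw [hx, one_mul, mul_one]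

lemma ketbra_mul_ketbra {d : ℕ} (u v w x : Fin d → ℂ) :
    ketbra u v * ketbra w x = cinner v w • ketbra u x := by
  ext i j
  simp only [Matrix.mul_apply, ketbra, Matrix.of_apply, Matrix.smul_apply, smul_eq_mul, cinner,
    Finset.sum_mul]
  exact Finset.sum_congr rfl fun _ _ => by ring

lemma trace_ketbra_mul {d : ℕ} (u v : Fin d → ℂ) (O : Matrix (Fin d) (Fin d) ℂ) :
    (ketbra u v * O).trace = cinner v (O.mulVec u) := by
  simp only [Matrix.trace, Matrix.diag, Matrix.mul_apply, ketbra, Matrix.of_apply, cinner,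
    Matrix.mulVec, dotProduct, Finset.mul_sum]
  rw [Finset.sum_comm]
  exact Finset.sum_congr rfl fun _ _ => Finset.sum_congr rfl fun _ _ => by ring

def spectralSum {d : ℕ} (ψ : Fin d → Fin d → ℂ) (a : Fin d → ℂ) : Matrix (Fin d) (Fin d) ℂ :=
  ∑ k, a k • ketbra (ψ k) (ψ k)

section SpectralSum

variable {d : ℕ} {ψ : Fin d → Fin d → ℂ}

lemma spectralSum_mul (horth : ∀ j k, cinner (ψ j) (ψ k) = if j = k then 1 else 0)
    (a b : Fin d → ℂ) : spectralSum ψ a * spectralSum ψ b = spectralSum ψ (a * b) := by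
  simp only [spectralSum, Finset.sum_mul_sum, Matrix.smul_mul, Matrix.mul_smul,
    ketbra_mul_ketbra, horth, smul_smul, ite_smul, one_smul, zero_smul, smul_ite, smul_zero,
    Finset.sum_ite_eq, Finset.mem_univ, if_true, Pi.mul_apply]
  exact Finset.sum_congr rfl fun _ _ => by rw [mul_comm (b _)]

lemma spectralSum_pow (horth : ∀ j k, cinner (ψ j) (ψ k) = if j = k then 1 else 0)
    (a : Fin d → ℂ) {n : ℕ} (hn : 1 ≤ n) : spectralSum ψ a ^ n = spectralSum ψ (a ^ n) := by
  induction n, hn using Nat.le_induction with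
  | base => simp
  | succ m _ ih => rw [pow_succ, ih, spectralSum_mul horth, pow_succ]

lemma trace_spectralSum_mul (a : Fin d → ℂ) (O : Matrix (Fin d) (Fin d) ℂ) :
    (spectralSum ψ a * O).trace = ∑ k, a k * cinner (ψ k) (O.mulVec (ψ k)) := by
  simp only [spectralSum, Finset.sum_mul, Matrix.trace_sum, Matrix.smul_mul, Matrix.trace_smul,
    trace_ketbra_mul, smul_eq_mul]

lemma trace_spectralSum (hnorm : ∀ k, cinner (ψ k) (ψ k) = 1) (a : Fin d → ℂ) :
    (spectralSum ψ a).trace = ∑ k, a k := by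
  simpa [hnorm] using trace_spectralSum_mul (ψ := ψ) a 1

end SpectralSum

lemma norm_weightedAverage_sub_le {ι 𝕜 : Type*} [Fintype ι] [DecidableEq ι] [RCLike 𝕜]
    {w : ι → ℝ} (hw : ∀ k, 0 ≤ w k) {q : ι} (hwq : 0 < w q) {c : ι → 𝕜} {M : ℝ}
    (hc : ∀ k, ‖c k‖ ≤ M) :
    ‖(∑ k, (w k : 𝕜) * c k) / (∑ k, (w k : 𝕜)) - c q‖ ≤
      2 * M * ((∑ k ∈ Finset.univ.erase q, w k) / w q) := by
  set W := ∑ k, w k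
  have hWq : w q ≤ W := Finset.single_le_sum (fun k _ => hw k) (Finset.mem_univ q)
  have hW : 0 < W := hwq.trans_le hWq
  -- the `k = q` term of the numerator vanishes
  have hdiff : (∑ k, (w k : 𝕜) * c k) / (W : 𝕜) - c q =
      (∑ k ∈ Finset.univ.erase q, (w k : 𝕜) * (c k - c q)) / (W : 𝕜) := by
    rw [Finset.sum_erase _ (by simp), eq_div_iff (by exact_mod_cast hW.ne'), sub_mul,
      div_mul_cancel₀ _ (by exact_mod_cast hW.ne'), RCLike.ofReal_sum, Finset.mul_sum,
      ← Finset.sum_sub_distrib]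
    exact Finset.sum_congr rfl fun _ _ => by ring
  have hnum : ‖∑ k ∈ Finset.univ.erase q, (w k : 𝕜) * (c k - c q)‖ ≤
      (∑ k ∈ Finset.univ.erase q, w k) * (2 * M) := by
    rw [Finset.sum_mul]
    refine (norm_sum_le _ _).trans (Finset.sum_le_sum fun k _ => ?_)
    rw [norm_mul, RCLike.norm_ofReal, abs_of_nonneg (hw k)]
    gcongr
    · exact hw k
    · exact (norm_sub_le _ _).trans (by linarith [hc k, hc q])
  have hM : 0 ≤ M := (norm_nonneg _).trans (hc q)
  rw [← RCLike.ofReal_sum, hdiff, norm_div, RCLike.norm_ofReal, abs_of_pos hW]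
  calc _ ≤ (∑ k ∈ Finset.univ.erase q, w k) * (2 * M) / W := by gcongr
    _ ≤ (∑ k ∈ Finset.univ.erase q, w k) * (2 * M) / w q := by
        gcongr
        exact mul_nonneg (Finset.sum_nonneg fun k _ => hw k) (by positivity)
    _ = _ := by ring

theorem virtual_distillation_bound_general
    {d : ℕ} (ψ : Fin d → Fin d → ℂ)
    (horth : ∀ j k, cinner (ψ j) (ψ k) = if j = k then 1 else 0)
    (p : Fin d → ℝ) (hp0 : ∀ k, 0 ≤ p k)
    (q : Fin d) (hpq : 0 < p q)
    (ρ : Matrix (Fin d) (Fin d) ℂ) (hρ : ρ = ∑ k, (p k : ℂ) • ketbra (ψ k) (ψ k))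
    (O : Matrix (Fin d) (Fin d) ℂ)
    (n : ℕ) (hn : 1 ≤ n) :
    0 < ((ρ ^ n).trace).re ∧
    ‖(ρ ^ n * O).trace / (ρ ^ n).trace - cinner (ψ q) (O.mulVec (ψ q))‖ ≤
      2 * opNorm O * ((∑ k ∈ Finset.univ.erase q, p k ^ n) / p q ^ n) := by
  have hnorm : ∀ k, cinner (ψ k) (ψ k) = 1 := fun k => by simpa using horth k k
  have hpow : ρ ^ n = spectralSum ψ fun k => ((p k ^ n : ℝ) : ℂ) := by
    rw [hρ, ← spectralSum, spectralSum_pow horth _ hn]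
    simp [Pi.pow_def]
  have htrace : (ρ ^ n).trace = ∑ k, ((p k ^ n : ℝ) : ℂ) := by
    rw [hpow, trace_spectralSum hnorm]
  refine ⟨?_, ?_⟩
  · rw [htrace, ← Complex.ofReal_sum, Complex.ofReal_re]
    exact Finset.sum_pos' (fun k _ => pow_nonneg (hp0 k) n) ⟨q, Finset.mem_univ q, pow_pos hpq n⟩
  · rw [htrace, hpow, trace_spectralSum_mul]
    exact norm_weightedAverage_sub_le (fun k => pow_nonneg (hp0 k) n) (pow_pos hpq n)
      fun k => norm_cinner_mulVec_le_opNorm O (hnorm k)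

/-- Lemma 2, virtual distillation bound: for `ρ = Σ_k p_k |ψ_k⟩⟨ψ_k|` with
dominant eigenvalue `p_q = max_k p_k > 0`, every Hermitian `O` and every `n ≥ 1`,
`tr(ρⁿ) > 0` and `|tr(ρⁿO)/tr(ρⁿ) − ⟨ψ_q, O ψ_q⟩| ≤ 2‖O‖_∞ (Σ_{k≠q} p_kⁿ)/p_qⁿ`. -/
theorem virtual_distillation_bound
    {d : ℕ} (ψ : Fin d → Fin d → ℂ)
    (horth : ∀ j k, cinner (ψ j) (ψ k) = if j = k then 1 else 0)
    (p : Fin d → ℝ) (hp0 : ∀ k, 0 ≤ p k) (hp1 : ∑ k, p k = 1)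
    (q : Fin d) (hq : ∀ k, p k ≤ p q) (hpq : 0 < p q)
    (ρ : Matrix (Fin d) (Fin d) ℂ) (hρ : ρ = ∑ k, (p k : ℂ) • ketbra (ψ k) (ψ k))
    (O : Matrix (Fin d) (Fin d) ℂ) (hO : O.IsHermitian)
    (n : ℕ) (hn : 1 ≤ n) :
    0 < ((ρ ^ n).trace).re ∧
    ‖(ρ ^ n * O).trace / (ρ ^ n).trace - cinner (ψ q) (O.mulVec (ψ q))‖ ≤
      2 * opNorm O * ((∑ k ∈ Finset.univ.erase q, p k ^ n) / p q ^ n) :=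
  virtual_distillation_bound_general ψ horth p hp0 q hpq ρ hρ O n hn

end
end

section
/- (Copy-number bound.) Let Q > 0, 0 < p_q < 1, let n ≥ 2 be an integer, and let p' be a probability vector on a finite nonempty index set with Rényi entropies H_n(p') = (1/(1−n)) ln Σ_k (p'_k)ⁿ and H_∞(p') = −ln max_k p'_k. Suppose Q/2 ≤ 2 (p_q⁻¹ − 1)ⁿ exp(−(n−1) H_n(p')) and that L := ln( (p_q⁻¹ − 1)⁻¹ ) + H_∞(p') > 0. Then n ≤ ( ln(4/Q) + H_∞(p') ) / L. -/
/-!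
With `M = max_k p'_k` and `c = p_q⁻¹ - 1`, the Rényi term is `exp(-(n-1) H_n) = Σ_k p'_kⁿ ≤ Mⁿ⁻¹`,
so the hypothesis gives `Q/4 ≤ cⁿ Mⁿ⁻¹ = (cM)ⁿ / M`. Taking logarithms, and using
`log (cM) = -L` and `-log M = H_∞`, this is `log (Q/4) ≤ -n L + H_∞`.
-/

open Finset Real

section ProbabilityVector

variable {ι : Type*} [Fintype ι] {p : ι → ℝ}

theorem exists_pos_of_sum_eq_one (hp1 : ∑ k, p k = 1) : ∃ k, 0 < p k := by
  obtain ⟨k, -, hk⟩ := exists_lt_of_sum_lt (s := univ) (f := fun _ ↦ (0 : ℝ)) (g := p)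
    (by simp [hp1])
  exact ⟨k, hk⟩

theorem sup'_pos_of_sum_eq_one [Nonempty ι] (hp1 : ∑ k, p k = 1) :
    0 < univ.sup' univ_nonempty p := by
  obtain ⟨k, hk⟩ := exists_pos_of_sum_eq_one hp1
  exact hk.trans_le (le_sup' p (mem_univ k))

theorem sum_pow_pos (hp0 : ∀ k, 0 ≤ p k) (hp1 : ∑ k, p k = 1) (n : ℕ) : 0 < ∑ k, p k ^ n := by
  obtain ⟨k, hk⟩ := exists_pos_of_sum_eq_one hp1
  exact sum_pos' (fun j _ ↦ pow_nonneg (hp0 j) n) ⟨k, mem_univ k, pow_pos hk n⟩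

theorem sum_pow_le_sup'_pow_pred [Nonempty ι] (hp0 : ∀ k, 0 ≤ p k) (hp1 : ∑ k, p k = 1) {n : ℕ}
    (hn : n ≠ 0) : ∑ k, p k ^ n ≤ univ.sup' univ_nonempty p ^ (n - 1) :=
  calc ∑ k, p k ^ n = ∑ k, p k ^ (n - 1) * p k := by simp only [pow_sub_one_mul hn]
    _ ≤ ∑ k, univ.sup' univ_nonempty p ^ (n - 1) * p k :=
      sum_le_sum fun k _ ↦
        mul_le_mul_of_nonneg_right (pow_le_pow_left₀ (hp0 k) (le_sup' p (mem_univ k)) _) (hp0 k)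
    _ = univ.sup' univ_nonempty p ^ (n - 1) := by rw [← mul_sum, hp1, mul_one]

end ProbabilityVector

theorem exp_neg_sub_one_mul_renyi {n S : ℝ} (hn : n ≠ 1) (hS : 0 < S) :
    exp (-(n - 1) * (1 / (1 - n) * log S)) = S := by
  have : 1 - n ≠ 0 := sub_ne_zero.2 hn.symm
  rw [show -(n - 1) * (1 / (1 - n) * log S) = log S by field_simp; ring, exp_log hS]

theorem log_le_mul_log_add_pred_mul_log {a c M : ℝ} (ha : 0 < a) (hc : 0 < c) (hM : 0 < M)
    {n : ℕ} (hn : n ≠ 0) (h : a ≤ c ^ n * M ^ (n - 1)) :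
    log a ≤ n * log c + (n - 1) * log M := by
  have := log_le_log ha h
  rwa [log_mul (by positivity) (by positivity), log_pow, log_pow,
    Nat.cast_pred (Nat.pos_of_ne_zero hn)] at this

/-- copy-number bound: if `Q/2 ≤ 2 (p_q⁻¹ − 1)ⁿ exp(−(n−1) H_n(p'))` and
`L = ln((p_q⁻¹ − 1)⁻¹) + H_∞(p') > 0`, then `n ≤ (ln(4/Q) + H_∞(p')) / L`, where
`H_n(p') = (1/(1−n)) ln Σ_k (p'_k)ⁿ` and `H_∞(p') = −ln max_k p'_k` for the probability
vector `p'` on a finite nonempty index set. -/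
theorem copy_number_bound
    {ι : Type*} [Fintype ι] [Nonempty ι]
    (p' : ι → ℝ) (hp0 : ∀ k, 0 ≤ p' k) (hp1 : ∑ k, p' k = 1)
    (Q pq : ℝ) (hQ : 0 < Q) (hpq0 : 0 < pq) (hpq1 : pq < 1)
    (n : ℕ) (hn : 2 ≤ n)
    (Hn Hinf L : ℝ)
    (hHn : Hn = (1 / (1 - (n : ℝ))) * Real.log (∑ k, p' k ^ n))
    (hHinf : Hinf = - Real.log (Finset.univ.sup' Finset.univ_nonempty p'))
    (hQn : Q / 2 ≤ 2 * (pq⁻¹ - 1) ^ n * Real.exp (-((n : ℝ) - 1) * Hn))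
    (hL : L = Real.log ((pq⁻¹ - 1)⁻¹) + Hinf) (hLpos : 0 < L) :
    (n : ℝ) ≤ (Real.log (4 / Q) + Hinf) / L := by
  set M := univ.sup' univ_nonempty p'
  set c := pq⁻¹ - 1
  have hn0 : n ≠ 0 := by omega
  have hc : 0 < c := sub_pos.2 ((one_lt_inv₀ hpq0).2 hpq1)
  have hexp : exp (-((n : ℝ) - 1) * Hn) = ∑ k, p' k ^ n :=
    hHn ▸ exp_neg_sub_one_mul_renyi (by norm_cast; omega) (sum_pow_pos hp0 hp1 n)
  have hQM : Q / 4 ≤ c ^ n * M ^ (n - 1) := by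
    have := mul_le_mul_of_nonneg_left (sum_pow_le_sup'_pow_pred hp0 hp1 hn0) (pow_nonneg hc.le n)
    rw [hexp] at hQn
    linarith
  have hlog := log_le_mul_log_add_pred_mul_log (by positivity) hc (sup'_pos_of_sum_eq_one hp1)
    hn0 hQM
  have hnL : n * L ≤ log (4 / Q) + Hinf := by
    rw [hL, hHinf, log_inv, ← inv_div, log_inv]
    linarith
  rwa [le_div_iff₀ hLpos]
end

section
/- (Median-of-means concentration, Theorem 2 probabilistic part.) Let K ≥ 1 and N ≥ 1 be integers and let (X_{k,i})_{1 ≤ k ≤ K, 1 ≤ i ≤ N} be independent, identically distributed real-valued square-integrable random variables with mean μ and variance v. For each k let M_k = (1/N) Σ_{i=1}^{N} X_{k,i} be the k-th batch mean. Then the probability that at least K/2 of the indices k satisfy |M_k − μ| > 2 √(v/N) is at most exp(−K/8). In particular, any median of the batch means M_1, …, M_K deviates from μ by more than 2 √(v/N) with probability at most exp(−K/8). -/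
/-!
Each batch mean has mean `μ` and variance `v / N`, so by Chebyshev it lands farther than
`2 √(v/N)` from `μ` with probability at most `1/4`. The batches are independent, hence so are the
indicators of these events, and Hoeffding's inequality bounds the probability that at least `K/2`
of them occur by `exp (-2K (1/2 - 1/4)²) = exp (-K/8)`. A median farther than `2 √(v/N)` from `μ`
drags at least half of the batch means with it.
-/

open MeasureTheory ProbabilityTheory Finset

namespace ProbabilityTheory

variable {Ω : Type*} {mΩ : MeasurableSpace Ω} {P : Measure Ω}

lemma iIndepFun.curry {ι κ 𝓧 : Type*} [MeasurableSpace 𝓧] {X : ι × κ → Ω → 𝓧}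
    (mX : ∀ p, Measurable (X p)) (h : iIndepFun X P) :
    iIndepFun (fun i ω j ↦ X (i, j) ω) P := by
  have := h.isProbabilityMeasure
  have : ∀ p, IsProbabilityMeasure (P.map (X p)) :=
    fun p ↦ Measure.isProbabilityMeasure_map (mX p).aemeasurable
  have hrow : ∀ i, P.map (fun ω j ↦ X (i, j) ω) = Measure.infinitePi fun j ↦ P.map (X (i, j)) :=
    fun i ↦ (h.precomp (Prod.mk_right_injective i)).map_fun_eq_infinitePi_map fun j ↦ mX _
  rw [iIndepFun_iff_map_fun_eq_infinitePi_map (fun i ↦ by fun_prop)]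
  simp_rw [hrow]
  rw [← Measure.infinitePi_map_curry (fun i j ↦ P.map (X (i, j))),
    ← h.map_fun_eq_infinitePi_map mX, Measure.map_map (by fun_prop) (by fun_prop)]
  rfl

lemma measureReal_mul_sqrt_variance_lt_abs_sub_le [IsFiniteMeasure P] {X : Ω → ℝ}
    (hX : MemLp X 2 P) {k : ℝ} (hk : 0 < k) :
    P.real {ω | k * √Var[X; P] < |X ω - P[X]|} ≤ 1 / k ^ 2 := by
  rcases (variance_nonneg X P).eq_or_lt with hzero | hpos
  · have hnull : P {ω | k * √Var[X; P] < |X ω - P[X]|} = 0 := by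
      rw [measure_eq_zero_iff_ae_notMem]
      filter_upwards [ae_eq_integral_of_variance_eq_zero hX hzero.symm] with ω hω
      simp only [hω, sub_self, abs_zero, not_lt]; positivity
    rw [measureReal_def, hnull, ENNReal.toReal_zero]
    positivity
  · have hc : 0 < k * √Var[X; P] := by positivity
    calc P.real {ω | k * √Var[X; P] < |X ω - P[X]|}
        ≤ P.real {ω | k * √Var[X; P] ≤ |X ω - P[X]|} :=
          measureReal_mono (Set.ofPred_subset_ofPred.2 fun _ h ↦ h.le)
      _ ≤ Var[X; P] / (k * √Var[X; P]) ^ 2 :=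
          ENNReal.toReal_le_of_le_ofReal (by positivity) (meas_ge_le_variance_div_sq hX hc)
      _ = 1 / k ^ 2 := by
          rw [mul_pow, Real.sq_sqrt hpos.le]
          field_simp

lemma integral_inv_card_mul_sum {ι : Type*} [Fintype ι] [Nonempty ι] {X : ι → Ω → ℝ}
    (hX : ∀ i, Integrable (X i) P) {m : ℝ} (hm : ∀ i, P[X i] = m) :
    ∫ ω, (Fintype.card ι : ℝ)⁻¹ * ∑ i, X i ω ∂P = m := by
  rw [integral_const_mul, integral_finsetSum _ fun i _ ↦ hX i]
  simp [hm]

lemma variance_inv_card_mul_sum {ι : Type*} [Fintype ι] {X : ι → Ω → ℝ}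
    (hX : ∀ i, MemLp (X i) 2 P) (hindep : Pairwise fun i j ↦ X i ⟂ᵢ[P] X j) {v : ℝ}
    (hv : ∀ i, Var[X i; P] = v) :
    Var[fun ω ↦ (Fintype.card ι : ℝ)⁻¹ * ∑ i, X i ω; P] = v / Fintype.card ι := by
  have hsum : Var[∑ i, X i; P] = ∑ i, Var[X i; P] :=
    IndepFun.variance_sum (fun i _ ↦ hX i) fun i _ j _ hij ↦ hindep hij
  have hfun : (fun ω ↦ ∑ i, X i ω) = ∑ i, X i := by ext; simp
  rw [variance_const_mul, hfun, hsum]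
  simp only [hv, Finset.sum_const, Finset.card_univ, nsmul_eq_mul]
  rcases eq_or_ne (Fintype.card ι : ℝ) 0 with h | h
  · simp [h]
  · field_simp

lemma measureReal_card_mul_le_sum_le_exp {ι : Type*} [Fintype ι] {Y : ι → Ω → ℝ}
    (hY : ∀ i, Measurable (Y i)) (hindep : iIndepFun Y P) (hbound : ∀ i ω, Y i ω ∈ Set.Icc 0 1)
    {p t : ℝ} (hp : ∀ i, P[Y i] ≤ p) (hpt : p ≤ t) :
    P.real {ω | Fintype.card ι * t ≤ ∑ i, Y i ω} ≤
      Real.exp (-2 * Fintype.card ι * (t - p) ^ 2) := by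
  have := hindep.isProbabilityMeasure
  set n : ℝ := (Fintype.card ι : ℝ)
  have hsubG : ∀ i ∈ Finset.univ, HasSubgaussianMGF (fun ω ↦ Y i ω - P[Y i])
      ((‖(1 : ℝ) - 0‖₊ / 2) ^ 2) P :=
    fun i _ ↦ hasSubgaussianMGF_of_mem_Icc (hY i).aemeasurable (ae_of_all _ (hbound i))
  have hcentered : iIndepFun (fun i ↦ (fun y ↦ y - P[Y i]) ∘ Y i) P :=
    hindep.comp (fun i y ↦ y - P[Y i]) fun _ ↦ measurable_id.sub_const _
  have hmean_sum : ∑ i, P[Y i] ≤ n * p := by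
    simpa [n] using Finset.sum_le_sum fun i (_ : i ∈ Finset.univ) ↦ hp i
  calc P.real {ω | n * t ≤ ∑ i, Y i ω}
      ≤ P.real {ω | n * (t - p) ≤ ∑ i, (Y i ω - P[Y i])} := by
        refine measureReal_mono (Set.ofPred_subset_ofPred.2 fun ω h ↦ ?_)
        rw [Finset.sum_sub_distrib]
        linarith
    _ ≤ Real.exp (-(n * (t - p)) ^ 2 / (2 * ∑ i, (‖(1 : ℝ) - 0‖₊ / 2) ^ 2 : NNReal)) :=
        HasSubgaussianMGF.measure_sum_ge_le_of_iIndepFun hcentered hsubG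
          (mul_nonneg (Nat.cast_nonneg _) (sub_nonneg.2 hpt))
    _ = Real.exp (-2 * n * (t - p) ^ 2) := by
        have hc : ((2 * ∑ _i : ι, (‖(1 : ℝ) - 0‖₊ / 2) ^ 2 : NNReal) : ℝ) = n / 2 := by
          norm_num [n]
          ring
        rw [hc]
        rcases eq_or_ne n 0 with h | h
        · simp [h]
        · field_simp

lemma measureReal_half_le_card_far_le_exp {ι : Type*} [Fintype ι] {M : ι → Ω → ℝ}
    (hmeas : ∀ k, Measurable (M k)) (hL2 : ∀ k, MemLp (M k) 2 P) (hindep : iIndepFun M P)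
    {m w : ℝ} (hmean : ∀ k, P[M k] = m) (hvar : ∀ k, Var[M k; P] ≤ w) :
    P.real {ω | (Fintype.card ι : ℝ) / 2 ≤ #{k | 2 * √w < |M k ω - m|}} ≤
      Real.exp (-(Fintype.card ι : ℝ) / 8) := by
  have := hindep.isProbabilityMeasure
  set far : Set ℝ := {x | 2 * √w < |x - m|}
  have hfar : MeasurableSet far := measurableSet_lt measurable_const (by fun_prop)
  set Y : ι → Ω → ℝ := fun k ↦ far.indicator 1 ∘ M k
  have hYindep : iIndepFun Y P := hindep.comp _ fun _ ↦ measurable_one.indicator hfar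
  have hYmeas : ∀ k, Measurable (Y k) := fun k ↦ (measurable_one.indicator hfar).comp (hmeas k)
  have hYbound : ∀ k ω, Y k ω ∈ Set.Icc 0 1 := fun k ω ↦ by
    by_cases h : M k ω ∈ far <;> simp [Y, h]
  have hYmean : ∀ k, P[Y k] ≤ 1 / 4 := fun k ↦ by
    have hY : Y k = (M k ⁻¹' far).indicator 1 := by ext ω; simp [Y, Set.indicator]
    calc P[Y k] = P.real {ω | 2 * √w < |M k ω - m|} := by
          rw [hY, integral_indicator_one (hmeas k hfar)]; rfl
      _ ≤ P.real {ω | 2 * √Var[M k; P] < |M k ω - P[M k]|} := by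
          refine measureReal_mono (Set.ofPred_subset_ofPred.2 fun ω h ↦ ?_)
          rw [hmean k]
          exact lt_of_le_of_lt (by gcongr; exact hvar k) h
      _ ≤ 1 / 2 ^ 2 := measureReal_mul_sqrt_variance_lt_abs_sub_le (hL2 k) two_pos
      _ = 1 / 4 := by norm_num
  have hcount : ∀ ω, (#{k | 2 * √w < |M k ω - m|} : ℝ) = ∑ k, Y k ω :=
    fun ω ↦ by simp [Y, far, Set.indicator, Finset.sum_boole]
  calc P.real {ω | (Fintype.card ι : ℝ) / 2 ≤ #{k | 2 * √w < |M k ω - m|}}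
      = P.real {ω | Fintype.card ι * (1 / 2) ≤ ∑ k, Y k ω} := by
        simp_rw [hcount, mul_one_div]
    _ ≤ Real.exp (-2 * Fintype.card ι * (1 / 2 - 1 / 4) ^ 2) :=
        measureReal_card_mul_le_sum_le_exp hYmeas hYindep hYbound hYmean (by norm_num)
    _ = Real.exp (-(Fintype.card ι : ℝ) / 8) := by ring_nf

end ProbabilityTheory

lemma le_card_filter_lt_abs_sub_of_lt_abs_sub {ι : Type*} [Fintype ι] (x : ι → ℝ)
    {r m a c : ℝ} (hle : r ≤ #{k | x k ≤ m}) (hge : r ≤ #{k | m ≤ x k}) (hfar : c < |m - a|) :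
    r ≤ #{k | c < |x k - a|} := by
  rcases lt_abs.mp hfar with h | h
  · refine hge.trans (Nat.cast_le.2 (Finset.card_le_card fun k hk ↦ ?_))
    simp only [Finset.mem_filter, Finset.mem_univ, true_and] at hk ⊢
    exact lt_of_lt_of_le (by linarith) (le_abs_self _)
  · refine hle.trans (Nat.cast_le.2 (Finset.card_le_card fun k hk ↦ ?_))
    simp only [Finset.mem_filter, Finset.mem_univ, true_and] at hk ⊢
    exact lt_of_lt_of_le (by linarith) (neg_le_abs _)

theorem median_of_means_concentration_general
    {Ω : Type*} [MeasureSpace Ω] [IsProbabilityMeasure (ℙ : Measure Ω)]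
    (K N : ℕ) (hN : 1 ≤ N)
    (X : Fin K × Fin N → Ω → ℝ)
    (hmeas : ∀ p, Measurable (X p))
    (hL2 : ∀ p, MemLp (X p) 2 ℙ)
    (hindep : iIndepFun X ℙ)
    (μ v : ℝ)
    (hmean : ∀ p, μ = ∫ ω, X p ω)
    (hvar : ∀ p, v = variance (X p) ℙ)
    (M : Fin K → Ω → ℝ) (hM : ∀ k ω, M k ω = (N : ℝ)⁻¹ * ∑ i, X (k, i) ω) :
    ℙ {ω | (K : ℝ) / 2 ≤
        (Finset.univ.filter fun k => 2 * Real.sqrt (v / N) < |M k ω - μ|).card} ≤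
      ENNReal.ofReal (Real.exp (-(K : ℝ) / 8)) ∧
    ∀ med : Ω → ℝ,
      (∀ ω, (K : ℝ) / 2 ≤ (Finset.univ.filter fun k => M k ω ≤ med ω).card ∧
            (K : ℝ) / 2 ≤ (Finset.univ.filter fun k => med ω ≤ M k ω).card) →
      ℙ {ω | 2 * Real.sqrt (v / N) < |med ω - μ|} ≤
        ENNReal.ofReal (Real.exp (-(K : ℝ) / 8)) := by
  have : Nonempty (Fin N) := ⟨⟨0, hN⟩⟩
  have hM_eq : ∀ k, M k = fun ω ↦ (Fintype.card (Fin N) : ℝ)⁻¹ * ∑ i, X (k, i) ω :=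
    fun k ↦ funext fun ω ↦ by rw [hM, Fintype.card_fin]
  have hMindep : iIndepFun M ℙ := by
    convert (hindep.curry hmeas).comp (fun _ x ↦ (N : ℝ)⁻¹ * ∑ i, x i) fun _ ↦ by fun_prop
    exact funext (hM _)
  have hMmeas : ∀ k, Measurable (M k) := fun k ↦ by rw [hM_eq]; fun_prop
  have hML2 : ∀ k, MemLp (M k) 2 ℙ := fun k ↦ by
    rw [hM_eq]; exact (memLp_finsetSum _ fun i _ ↦ hL2 (k, i)).const_mul _
  have hMmean : ∀ k, ℙ[M k] = μ := fun k ↦ by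
    rw [hM_eq]
    exact integral_inv_card_mul_sum (fun i ↦ (hL2 _).integrable one_le_two) fun i ↦ (hmean _).symm
  have hMvar : ∀ k, Var[M k; ℙ] ≤ v / N := fun k ↦ by
    rw [hM_eq, variance_inv_card_mul_sum (fun i ↦ hL2 _)
      (fun i j hij ↦ hindep.indepFun (by simpa using hij)) fun i ↦ (hvar _).symm,
      Fintype.card_fin]
  have hfar : ℙ {ω | (K : ℝ) / 2 ≤ #{k | 2 * √(v / N) < |M k ω - μ|}} ≤
      ENNReal.ofReal (Real.exp (-(K : ℝ) / 8)) := by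
    rw [← ofReal_measureReal]
    refine ENNReal.ofReal_le_ofReal ?_
    simpa using measureReal_half_le_card_far_le_exp hMmeas hML2 hMindep hMmean hMvar
  refine ⟨hfar, fun med hmed ↦ (measure_mono fun ω hω ↦ ?_).trans hfar⟩
  exact le_card_filter_lt_abs_sub_of_lt_abs_sub (M · ω) (hmed ω).1 (hmed ω).2 hω

/-- median-of-means concentration: for i.i.d. square-integrable real random
variables `X_{k,i}` (`1 ≤ k ≤ K`, `1 ≤ i ≤ N`) with mean `μ` and variance `v`, and batch means
`M_k = (1/N) Σ_i X_{k,i}`, the probability that at least `K/2` of the batch means deviate from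
`μ` by more than `2 √(v/N)` is at most `exp(−K/8)`; in particular any median of the batch means
deviates from `μ` by more than `2 √(v/N)` with probability at most `exp(−K/8)`. -/
theorem median_of_means_concentration
    {Ω : Type*} [MeasureSpace Ω] [IsProbabilityMeasure (ℙ : Measure Ω)]
    (K N : ℕ) (hK : 1 ≤ K) (hN : 1 ≤ N)
    (X : Fin K × Fin N → Ω → ℝ)
    (hmeas : ∀ p, Measurable (X p))
    (hL2 : ∀ p, MemLp (X p) 2 ℙ)
    (hindep : iIndepFun X ℙ)
    (hident : ∀ p q, IdentDistrib (X p) (X q) ℙ ℙ)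
    (μ v : ℝ)
    (hmean : ∀ p, μ = ∫ ω, X p ω)
    (hvar : ∀ p, v = variance (X p) ℙ)
    (M : Fin K → Ω → ℝ) (hM : ∀ k ω, M k ω = (N : ℝ)⁻¹ * ∑ i, X (k, i) ω) :
    ℙ {ω | (K : ℝ) / 2 ≤
        (Finset.univ.filter fun k => 2 * Real.sqrt (v / N) < |M k ω - μ|).card} ≤
      ENNReal.ofReal (Real.exp (-(K : ℝ) / 8)) ∧
    ∀ med : Ω → ℝ,
      (∀ ω, (K : ℝ) / 2 ≤ (Finset.univ.filter fun k => M k ω ≤ med ω).card ∧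
            (K : ℝ) / 2 ≤ (Finset.univ.filter fun k => med ω ≤ M k ω).card) →
      ℙ {ω | 2 * Real.sqrt (v / N) < |med ω - μ|} ≤
        ENNReal.ofReal (Real.exp (-(K : ℝ) / 8)) :=
  median_of_means_concentration_general K N hN X hmeas hL2 hindep μ v hmean hvar M hM
end
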